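/- For any word u ∈ A*, the shape of the P-symbol of u (the pair (T_L, T_R) computed by the Baxter insertion algorithm) is a pair of twin binary trees, i.e., the canopies of the shapes of T_L and T_R are complementary. -/

import Mathlib

open scoped Classical

/-- Baxter adjacency relations on words over the alphabet of natural numbers. -/
def BaxterAdj (w w' : List ℕ) : Prop :=
  (∃ (a b c d : ℕ) (u v : List ℕ), a ≤ b ∧ b < c ∧ c ≤ d ∧
      w = c :: (u ++ a :: d :: (v ++ [b])) ∧ w' = c :: (u ++ d :: a :: (v ++ [b]))) ∨
  (∃ (a b c d : ℕ) (u v : List ℕ), a < b ∧ b ≤ c ∧ c < d ∧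
      w = b :: (u ++ d :: a :: (v ++ [c])) ∧ w' = b :: (u ++ a :: d :: (v ++ [c])))

/-- One rewriting step: an adjacency applied inside a word (congruence context). -/
def BaxterStep (w w' : List ℕ) : Prop :=
  ∃ (p s u v : List ℕ), BaxterAdj u v ∧ w = p ++ u ++ s ∧ w' = p ++ v ++ s

/-- The Baxter congruence: the equivalence generated by the Baxter steps. -/
def BaxterEquiv : List ℕ → List ℕ → Prop := Relation.EqvGen BaxterStep

/-- Sylvester adjacency: a c u b ≡ c a u b when a ≤ b < c. -/
def SylvAdj (w w' : List ℕ) : Prop :=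
  ∃ (a b c : ℕ) (u : List ℕ), a ≤ b ∧ b < c ∧
    w = a :: c :: (u ++ [b]) ∧ w' = c :: a :: (u ++ [b])

def SylvStep (w w' : List ℕ) : Prop :=
  ∃ (p s u v : List ℕ), SylvAdj u v ∧ w = p ++ u ++ s ∧ w' = p ++ v ++ s

def SylvEquiv : List ℕ → List ℕ → Prop := Relation.EqvGen SylvStep

/-- #-sylvester adjacency: b u a c ≡ b u c a when a < b ≤ c. -/
def SylvHAdj (w w' : List ℕ) : Prop :=
  ∃ (a b c : ℕ) (u : List ℕ), a < b ∧ b ≤ c ∧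
    w = b :: (u ++ [a, c]) ∧ w' = b :: (u ++ [c, a])

def SylvHStep (w w' : List ℕ) : Prop :=
  ∃ (p s u v : List ℕ), SylvHAdj u v ∧ w = p ++ u ++ s ∧ w' = p ++ v ++ s

def SylvHEquiv : List ℕ → List ℕ → Prop := Relation.EqvGen SylvHStep

/-- The standardized word of `u`: position `i` receives the rank of the letter `u i`
(ties broken from left to right), ranks starting at `1`. -/
def std (u : List ℕ) : List ℕ :=
  (List.range u.length).map fun i =>
    ((List.range u.length).filter fun j =>
      decide (u.getD j 0 < u.getD i 0 ∨ (u.getD j 0 = u.getD i 0 ∧ j < i))).length + 1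

/-- The maximal letter of a word. -/
def wordMax (u : List ℕ) : ℕ := u.foldr max 0

/-- The Schützenberger transformation: reverse and complement each letter w.r.t. max + 1. -/
def schutz (u : List ℕ) : List ℕ := u.reverse.map fun x => wordMax u + 1 - x

/-- Labeled binary trees. -/
inductive BT where
  | leaf : BT
  | node : BT → ℕ → BT → BT
deriving DecidableEq

/-- Leaf insertion into a left binary search tree. -/
def leafInsL : BT → ℕ → BT
  | .leaf, a => .node .leaf a .leaf
  | .node l b r, a => if a < b then .node (leafInsL l a) b r else .node l b (leafInsL r a)

/-- Leaf insertion into a right binary search tree. -/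
def leafInsR : BT → ℕ → BT
  | .leaf, a => .node .leaf a .leaf
  | .node l b r, a => if a ≤ b then .node (leafInsR l a) b r else .node l b (leafInsR r a)

/-- The lower restricted tree `T_{≤ a}` of a right binary search tree. -/
def splitLE : BT → ℕ → BT
  | .leaf, _ => .leaf
  | .node l b r, a => if b ≤ a then .node l b (splitLE r a) else splitLE l a

/-- The higher restricted tree `T_{> a}` of a right binary search tree. -/
def splitGT : BT → ℕ → BT
  | .leaf, _ => .leaf
  | .node l b r, a => if b ≤ a then splitGT r a else .node (splitGT l a) b r

/-- Root insertion into a right binary search tree. -/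
def rootIns (t : BT) (a : ℕ) : BT := .node (splitLE t a) a (splitGT t a)

/-- The left tree of the P-symbol: leaf insertions from left to right. -/
def insL (u : List ℕ) : BT := u.foldl leafInsL .leaf

/-- The right tree of the P-symbol: root insertions from left to right. -/
def insR (u : List ℕ) : BT := u.foldl rootIns .leaf

/-- The P-symbol of a word. -/
def Psymb (u : List ℕ) : BT × BT := (insL u, insR u)

/-- Unlabeled binary trees. -/
inductive UBT where
  | leaf : UBT
  | node : UBT → UBT → UBT
deriving DecidableEq

/-- The shape of a labeled binary tree. -/
def shape : BT → UBT
  | .leaf => .leaf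
  | .node l _ r => .node (shape l) (shape r)

/-- The shape of the P-symbol of a word. -/
def Pshape (u : List ℕ) : UBT × UBT := (shape (insL u), shape (insR u))

/-- Number of internal nodes. -/
def sizeU : UBT → ℕ
  | .leaf => 0
  | .node l r => sizeU l + sizeU r + 1

/-- Orientations of the leaves, from left to right: `true` means right-oriented
(the leaf is the right child of its parent); the parameter is the orientation
assigned if the tree is reduced to a leaf. -/
def loU : UBT → Bool → List Bool
  | .leaf, b => [b]
  | .node l r, _ => loU l false ++ loU r true

/-- Leaf orientations of a labeled binary tree. -/
def loB : BT → Bool → List Bool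
  | .leaf, b => [b]
  | .node l _ r, _ => loB l false ++ loB r true

/-- The canopy: orientations of the leaves except the first and the last one. -/
def canU (t : UBT) : List Bool := ((loU t false).drop 1).dropLast

/-- A pair of twin binary trees: same number of nodes and complementary canopies. -/
def IsTwin (J : UBT × UBT) : Prop :=
  sizeU J.1 = sizeU J.2 ∧ (canU J.1).length = (canU J.2).length ∧
    ∀ i < (canU J.1).length, (canU J.1).getD i false ≠ (canU J.2).getD i false

/-- `σ` is (the word of) a permutation of `{1, …, n}`. -/
def IsPerm (n : ℕ) (σ : List ℕ) : Prop := σ.Perm (List.range' 1 n)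

/-- Covering-type step of the right permutohedron (weak) order: exchange of two
adjacent letters `a < b`. -/
def PermutoStep (σ ν : List ℕ) : Prop :=
  ∃ (p s : List ℕ) (a b : ℕ), a < b ∧ σ = p ++ a :: b :: s ∧ ν = p ++ b :: a :: s

/-- The right permutohedron (weak) order. -/
def PermutoLe : List ℕ → List ℕ → Prop := Relation.ReflTransGen PermutoStep

/-- Baxter permutations: avoiding the generalized patterns 2-41-3 and 3-14-2. -/
def IsBaxterPerm (σ : List ℕ) : Prop :=
  ∀ i j k, i < j → j + 1 < k → k < σ.length →
    ¬(σ.getD (j+1) 0 < σ.getD i 0 ∧ σ.getD i 0 < σ.getD k 0 ∧ σ.getD k 0 < σ.getD j 0) ∧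
    ¬(σ.getD j 0 < σ.getD k 0 ∧ σ.getD k 0 < σ.getD i 0 ∧ σ.getD i 0 < σ.getD (j+1) 0)

/-!
In a search tree the leaf number `m` (counted from `0`) separates the `m` smallest labels from the
others. Inserting a letter `a` replaces the leaf number `m = #{letters ≤ a}` by two leaves, and
since both trees carry the letters of the word, it is the same `m` in `T_L` and `T_R`. Leaf
insertion into `T_L` puts a left leaf followed by a right leaf in its place. Root insertion into
`T_R` splits it into `T_{≤ a}` and `T_{> a}`, and puts the last leaf of `T_{≤ a}`, which is a right
leaf, followed by the first leaf of `T_{> a}`, which is a left leaf, in its place, except at the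
two ends of the word, which are not part of the canopy. So the leaf-orientation words of `T_L` and
`T_R` stay complementary between their ends.
-/

namespace List

variable {α : Type*}

def expandAt (L : List α) (m : ℕ) (x y : α) : List α := L.take m ++ x :: y :: L.drop (m + 1)

lemma length_expandAt {L : List α} {m : ℕ} (hm : m < L.length) (x y : α) :
    (L.expandAt m x y).length = L.length + 1 := by
  simp only [expandAt, length_append, length_take, length_cons, length_drop]
  omega

lemma getD_expandAt {L : List α} {m : ℕ} (hm : m ≤ L.length) (x y d : α) (i : ℕ) :
    (L.expandAt m x y).getD i d =
      if i < m then L.getD i d else if i = m then x else if i = m + 1 then y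
      else L.getD (i - 1) d := by
  simp only [expandAt, getD_eq_getElem?_getD, getElem?_append, length_take,
    min_eq_left hm, getElem?_take, getElem?_cons, getElem?_drop]
  split_ifs <;> first | rfl | omega | (congr 2; omega)

lemma expandAt_append_of_lt {L₁ : List α} {m : ℕ} (h : m < L₁.length) (L₂ : List α) (x y : α) :
    (L₁ ++ L₂).expandAt m x y = L₁.expandAt m x y ++ L₂ := by
  simp [expandAt, take_append_of_le_length h.le, drop_append_of_le_length h]

lemma expandAt_append_of_le {L₁ : List α} {m : ℕ} (h : L₁.length ≤ m) (L₂ : List α) (x y : α) :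
    (L₁ ++ L₂).expandAt m x y = L₁ ++ L₂.expandAt (m - L₁.length) x y := by
  rw [expandAt, expandAt, take_append, drop_append, take_of_length_le h,
    drop_of_length_le (by omega), Nat.sub_add_comm h]
  simp

end List

/-- The twin condition, read on whole leaf-orientation words instead of canopies. -/
def InteriorCompl (L R : List Bool) : Prop :=
  L.length = R.length ∧ ∀ i, 0 < i → i + 1 < L.length → L.getD i false ≠ R.getD i false

lemma InteriorCompl.expandAt {L R : List Bool} {n m : ℕ} (h : InteriorCompl L R)
    (hL : L.length = n + 1) (hm : m ≤ n) :
    InteriorCompl (L.expandAt m false true) (R.expandAt m (decide (m ≠ 0)) (decide (m = n))) := by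
  obtain ⟨hlen, hdiff⟩ := h
  refine ⟨by rw [List.length_expandAt (by omega), List.length_expandAt (by omega), hlen], ?_⟩
  intro i hi0 hin
  rw [List.length_expandAt (by omega)] at hin
  rw [List.getD_expandAt (by omega), List.getD_expandAt (by omega)]
  split_ifs with h1 h2 h3
  · exact hdiff i hi0 (by omega)
  · subst h2; simpa using hi0.ne'
  · simpa using (by omega : m ≠ n)
  · exact hdiff (i - 1) (by omega) (by omega)

namespace BT

def labels : BT → List ℕ
  | leaf => []
  | node l x r => labels l ++ x :: labels r

def IsLeftSearch : BT → Prop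
  | leaf => True
  | node l x r => (∀ y ∈ labels l, y < x) ∧ (∀ y ∈ labels r, x ≤ y) ∧
      IsLeftSearch l ∧ IsLeftSearch r

def IsRightSearch : BT → Prop
  | leaf => True
  | node l x r => (∀ y ∈ labels l, y ≤ x) ∧ (∀ y ∈ labels r, x < y) ∧
      IsRightSearch l ∧ IsRightSearch r

def countLE (t : BT) (a : ℕ) : ℕ := t.labels.countP (· ≤ a)

lemma length_loB (t : BT) (b : Bool) : (loB t b).length = t.labels.length + 1 := by
  induction t generalizing b with
  | leaf => rfl
  | node l x r ihl ihr =>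
    simp only [loB, labels, List.length_append, List.length_cons, ihl, ihr]
    omega

lemma take_loB {t : BT} {k : ℕ} (hk : k ≤ t.labels.length) (b b' : Bool) :
    (loB t b).take k = (loB t b').take k := by
  cases t with
  | leaf => simp_all [labels]
  | node => rfl

lemma drop_loB (t : BT) (k : ℕ) (b b' : Bool) :
    (loB t b).drop (k + 1) = (loB t b').drop (k + 1) := by
  cases t <;> simp [loB]

lemma countLE_le_length (t : BT) (a : ℕ) : t.countLE a ≤ t.labels.length :=
  List.countP_le_length

lemma countLE_node (l r : BT) (c a : ℕ) :
    (node l c r).countLE a = l.countLE a + (if c ≤ a then 1 else 0) + r.countLE a := by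
  simp only [countLE, labels, List.countP_append, List.countP_cons, decide_eq_true_eq]
  omega

lemma countLE_eq_length {t : BT} {a : ℕ} (h : ∀ y ∈ t.labels, y ≤ a) :
    t.countLE a = t.labels.length :=
  List.countP_eq_length.mpr fun y hy => decide_eq_true (h y hy)

lemma countLE_eq_zero {t : BT} {a : ℕ} (h : ∀ y ∈ t.labels, a < y) : t.countLE a = 0 :=
  List.countP_eq_zero.mpr fun y hy => by simpa using h y hy

lemma labels_leafInsL_perm (t : BT) (a : ℕ) : (leafInsL t a).labels.Perm (a :: t.labels) := by
  induction t with
  | leaf => rfl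
  | node l c r ihl ihr =>
    rw [leafInsL]
    split_ifs
    · exact ihl.append_right _
    · exact ((ihr.cons c).trans (.swap a c _)).append_left _ |>.trans List.perm_middle

lemma IsLeftSearch.leafInsL {t : BT} (ht : t.IsLeftSearch) (a : ℕ) :
    (leafInsL t a).IsLeftSearch := by
  induction t with
  | leaf => simp [_root_.leafInsL, IsLeftSearch, labels]
  | node l c r ihl ihr =>
    obtain ⟨hl, hr, hsl, hsr⟩ := ht
    rw [_root_.leafInsL]
    split_ifs with hac
    · refine ⟨fun y hy => ?_, hr, ihl hsl, hsr⟩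
      rcases List.mem_cons.mp ((labels_leafInsL_perm l a).mem_iff.mp hy) with rfl | h
      exacts [hac, hl y h]
    · refine ⟨hl, fun y hy => ?_, hsl, ihr hsr⟩
      rcases List.mem_cons.mp ((labels_leafInsL_perm r a).mem_iff.mp hy) with rfl | h
      exacts [not_lt.mp hac, hr y h]

lemma loB_leafInsL {t : BT} (ht : t.IsLeftSearch) (a : ℕ) (b : Bool) :
    loB (leafInsL t a) b = (loB t b).expandAt (t.countLE a) false true := by
  induction t generalizing b with
  | leaf => rfl
  | node l c r ihl ihr =>
    obtain ⟨hl, hr, hsl, hsr⟩ := ht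
    have hlen := length_loB l false
    by_cases hac : a < c
    · have hcnt := countLE_le_length l a
      rw [leafInsL, if_pos hac, countLE_node, if_neg (by omega),
        countLE_eq_zero fun y hy => hac.trans_le (hr y hy), loB, ihl hsl, loB,
        List.expandAt_append_of_lt (by omega), add_zero, add_zero]
    · have hca := not_lt.mp hac
      rw [leafInsL, if_neg hac, countLE_node, if_pos hca,
        countLE_eq_length fun y hy => ((hl y hy).trans_le hca).le, loB, ihr hsr, loB,
        List.expandAt_append_of_le (by omega)]
      congr 2
      omega

section RightSearch

variable {t : BT}

lemma labels_splitLE (ht : t.IsRightSearch) (a : ℕ) :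
    (splitLE t a).labels = t.labels.filter (· ≤ a) := by
  induction t with
  | leaf => rfl
  | node l c r ihl ihr =>
    obtain ⟨hl, hr, hsl, hsr⟩ := ht
    by_cases hca : c ≤ a
    · have hl' : l.labels.filter (· ≤ a) = l.labels :=
        List.filter_eq_self.mpr fun y hy => by simpa using (hl y hy).trans hca
      simp [splitLE, hca, labels, ihr hsr, hl']
    · have hr' : r.labels.filter (· ≤ a) = [] :=
        List.filter_eq_nil_iff.mpr fun y hy => by simpa using (not_le.mp hca).trans (hr y hy)
      simp [splitLE, hca, labels, ihl hsl, hr']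

lemma labels_splitGT (ht : t.IsRightSearch) (a : ℕ) :
    (splitGT t a).labels = t.labels.filter (fun y => !decide (y ≤ a)) := by
  induction t with
  | leaf => rfl
  | node l c r ihl ihr =>
    obtain ⟨hl, hr, hsl, hsr⟩ := ht
    by_cases hca : c ≤ a
    · have hl' : l.labels.filter (fun y => !decide (y ≤ a)) = [] :=
        List.filter_eq_nil_iff.mpr fun y hy => by simpa using (hl y hy).trans hca
      simp [splitGT, hca, labels, ihr hsr, hl']
    · have hr' : r.labels.filter (fun y => !decide (y ≤ a)) = r.labels :=
        List.filter_eq_self.mpr fun y hy => by simpa using (not_le.mp hca).trans (hr y hy)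
      simp [splitGT, hca, labels, ihl hsl, hr']

lemma labels_rootIns_perm (ht : t.IsRightSearch) (a : ℕ) :
    (rootIns t a).labels.Perm (a :: t.labels) := by
  rw [rootIns, labels, labels_splitLE ht, labels_splitGT ht]
  exact List.perm_middle.trans ((List.filter_append_perm _ _).cons a)

lemma IsRightSearch.splitLE (ht : t.IsRightSearch) (a : ℕ) : (splitLE t a).IsRightSearch := by
  induction t with
  | leaf => trivial
  | node l c r ihl ihr =>
    obtain ⟨hl, hr, hsl, hsr⟩ := ht
    rw [_root_.splitLE]
    split_ifs
    · refine ⟨hl, fun y hy => ?_, hsl, ihr hsr⟩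
      rw [labels_splitLE hsr] at hy
      exact hr y (List.mem_of_mem_filter hy)
    · exact ihl hsl

lemma IsRightSearch.splitGT (ht : t.IsRightSearch) (a : ℕ) : (splitGT t a).IsRightSearch := by
  induction t with
  | leaf => trivial
  | node l c r ihl ihr =>
    obtain ⟨hl, hr, hsl, hsr⟩ := ht
    rw [_root_.splitGT]
    split_ifs
    · exact ihr hsr
    · refine ⟨fun y hy => ?_, hr, ihl hsl, hsr⟩
      rw [labels_splitGT hsl] at hy
      exact hl y (List.mem_of_mem_filter hy)

lemma IsRightSearch.rootIns (ht : t.IsRightSearch) (a : ℕ) : (rootIns t a).IsRightSearch := by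
  refine ⟨fun y hy => ?_, fun y hy => ?_, ht.splitLE a, ht.splitGT a⟩
  · rw [labels_splitLE ht] at hy
    simpa using List.of_mem_filter hy
  · rw [labels_splitGT ht] at hy
    simpa using List.of_mem_filter hy

lemma loB_splitLE (ht : t.IsRightSearch) (a : ℕ) (b : Bool) :
    loB (splitLE t a) b =
      (loB t b).take (t.countLE a) ++ [if t.countLE a = 0 then b else true] := by
  induction t generalizing b with
  | leaf => rfl
  | node l c r ihl ihr =>
    obtain ⟨hl, hr, hsl, hsr⟩ := ht
    have hlen := length_loB l false
    by_cases hca : c ≤ a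
    · rw [countLE_node, countLE_eq_length fun y hy => (hl y hy).trans hca]
      simp [splitLE, hca, loB, ihr hsr, List.take_append, hlen]
    · have hcnt := countLE_le_length l a
      rw [countLE_node, countLE_eq_zero fun y hy => (not_le.mp hca).trans (hr y hy)]
      simp [splitLE, hca, loB, ihl hsl, take_loB hcnt b false, List.take_append, hlen]
      omega

lemma loB_splitGT (ht : t.IsRightSearch) (a : ℕ) (b : Bool) :
    loB (splitGT t a) b =
      (if t.countLE a = t.labels.length then b else false) ::
        (loB t b).drop (t.countLE a + 1) := by
  induction t generalizing b with
  | leaf => rfl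
  | node l c r ihl ihr =>
    obtain ⟨hl, hr, hsl, hsr⟩ := ht
    have hlen := length_loB l false
    have hsize : (node l c r).labels.length = l.labels.length + 1 + r.labels.length := by
      simp only [labels, List.length_append, List.length_cons]; omega
    by_cases hca : c ≤ a
    · rw [countLE_node, countLE_eq_length fun y hy => (hl y hy).trans hca, if_pos hca,
        splitGT, if_pos hca, ihr hsr, drop_loB r _ b true, hsize]
      simp only [loB, Nat.add_left_cancel_iff]
      rw [show l.labels.length + 1 + r.countLE a + 1 = (loB l false).length + (r.countLE a + 1)
        by omega, List.drop_length_add_append]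
    · have hcnt := countLE_le_length l a
      rw [countLE_node, countLE_eq_zero fun y hy => (not_le.mp hca).trans (hr y hy), if_neg hca,
        splitGT, if_neg hca, hsize, if_neg (by omega), loB, ihl hsl, loB,
        List.drop_append_of_le_length (by omega)]
      simp

lemma loB_rootIns (ht : t.IsRightSearch) (a : ℕ) (b : Bool) :
    loB (rootIns t a) b = (loB t b).expandAt (t.countLE a) (decide (t.countLE a ≠ 0))
      (decide (t.countLE a = t.labels.length)) := by
  rw [rootIns, loB, loB_splitLE ht, loB_splitGT ht,
    take_loB (countLE_le_length t a) false b, drop_loB t _ true b]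
  simp [List.expandAt]

end RightSearch

lemma insL_append_singleton (w : List ℕ) (a : ℕ) : insL (w ++ [a]) = leafInsL (insL w) a := by
  simp [insL]

lemma insR_append_singleton (w : List ℕ) (a : ℕ) : insR (w ++ [a]) = rootIns (insR w) a := by
  simp [insR]

lemma isLeftSearch_insL (u : List ℕ) : (insL u).IsLeftSearch := by
  induction u using List.reverseRecOn with
  | nil => trivial
  | append_singleton w a ih => rw [insL_append_singleton]; exact ih.leafInsL a

lemma isRightSearch_insR (u : List ℕ) : (insR u).IsRightSearch := by
  induction u using List.reverseRecOn with
  | nil => trivial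
  | append_singleton w a ih => rw [insR_append_singleton]; exact ih.rootIns a

lemma labels_insL_perm (u : List ℕ) : (insL u).labels.Perm u := by
  induction u using List.reverseRecOn with
  | nil => rfl
  | append_singleton w a ih =>
    rw [insL_append_singleton]
    exact (labels_leafInsL_perm _ a).trans
      ((ih.cons a).trans (List.perm_append_singleton a w).symm)

lemma labels_insR_perm (u : List ℕ) : (insR u).labels.Perm u := by
  induction u using List.reverseRecOn with
  | nil => rfl
  | append_singleton w a ih =>
    rw [insR_append_singleton]
    exact (labels_rootIns_perm (isRightSearch_insR w) a).trans
      ((ih.cons a).trans (List.perm_append_singleton a w).symm)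

lemma interiorCompl_loB_insL_insR (u : List ℕ) :
    InteriorCompl (loB (insL u) false) (loB (insR u) false) := by
  induction u using List.reverseRecOn with
  | nil => exact ⟨rfl, fun i hi0 hi1 => absurd hi1 (by simp [insL, loB])⟩
  | append_singleton w a ih =>
    have hperm := (labels_insR_perm w).trans (labels_insL_perm w).symm
    have hcount : (insR w).countLE a = (insL w).countLE a := hperm.countP_eq _
    rw [insL_append_singleton, insR_append_singleton, loB_leafInsL (isLeftSearch_insL w),
      loB_rootIns (isRightSearch_insR w), hcount, hperm.length_eq]
    exact ih.expandAt (length_loB _ _) (countLE_le_length _ _)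

end BT

lemma length_loU (t : UBT) (b : Bool) : (loU t b).length = sizeU t + 1 := by
  induction t generalizing b with
  | leaf => rfl
  | node l r ihl ihr => simp only [loU, sizeU, List.length_append, ihl, ihr]; omega

lemma loU_shape (t : BT) (b : Bool) : loU (shape t) b = loB t b := by
  induction t generalizing b with
  | leaf => rfl
  | node l x r ihl ihr => simp [shape, loU, loB, ihl, ihr]

lemma isTwin_of_interiorCompl {s t : UBT} (h : InteriorCompl (loU s false) (loU t false)) :
    IsTwin (s, t) := by
  obtain ⟨hlen, hdiff⟩ := h
  rw [length_loU, length_loU] at hlen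
  refine ⟨by simpa using hlen, by simp [canU, length_loU, hlen], fun i hi => ?_⟩
  simp only [canU, List.length_dropLast, List.length_drop, length_loU] at hi
  have hs : i < sizeU s - 1 := by omega
  have ht : i < sizeU t - 1 := by omega
  have := hdiff (i + 1) (by omega) (by rw [length_loU]; omega)
  simpa only [canU, List.getD_eq_getElem?_getD, List.getElem?_dropLast, List.length_drop,
    length_loU, Nat.add_sub_cancel, hs, ht, if_true, List.getElem?_drop, add_comm 1 i] using this

/-- the shape of the P-symbol of any word is a pair of twin
binary trees. -/
theorem Pshape_isTwin (u : List ℕ) : IsTwin (Pshape u) := by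
  apply isTwin_of_interiorCompl
  rw [loU_shape, loU_shape]
  exact BT.interiorCompl_loB_insL_insR u
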